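/- arXiv:1811.03699 — 3 statements merged into one kernel-verified Lean document; each statement's English description precedes it below -/
import Mathlib

section
/- Let h > 0, U(X) = −2·sech²(X), X_h(v) = arcsinh(√((2+h)/h)·sinh(v√h/2)) and Z_h(v) = 8·X_h′(v). Then for every real v one has Z_h(v)²/16 + U(X_h(v)) = h, i.e. the curve v ↦ (X_h(v), Z_h(v)) lies in the level set H_p = h of H_p(X,Z) = Z²/16 + U(X). -/
/-!
With `S = sinh²(v√h/2)` and `c² = (2+h)/h`, the identity `cosh (arsinh y) = √(1 + y²)` makes
both `Z_h²/16 = (2+h)(1+S)/(1+c²S)` and `U(X_h) = -2/(1+c²S)` rational in `S`; their sum has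
numerator `h + (2+h)S = h(1+c²S)`.
-/

open Real

theorem sq_one_div_cosh_arsinh (y : ℝ) : (1 / cosh (arsinh y)) ^ 2 = 1 / (1 + y ^ 2) := by
  rw [cosh_arsinh, div_pow, one_pow, sq_sqrt (by positivity)]

theorem hasDerivAt_arsinh_const_mul_sinh (c k w : ℝ) :
    HasDerivAt (fun w => arsinh (c * sinh (w * k)))
      ((√(1 + (c * sinh (w * k)) ^ 2))⁻¹ * (c * (cosh (w * k) * k))) w :=
  (((hasDerivAt_mul_const k).sinh).const_mul c).arsinh

theorem sq_deriv_arsinh_const_mul_sinh (c k w : ℝ) :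
    deriv (fun w => arsinh (c * sinh (w * k))) w ^ 2
      = c ^ 2 * k ^ 2 * (1 + sinh (w * k) ^ 2) / (1 + c ^ 2 * sinh (w * k) ^ 2) := by
  rw [(hasDerivAt_arsinh_const_mul_sinh c k w).deriv, mul_pow, inv_pow,
    sq_sqrt (by positivity)]
  simp only [mul_pow, cosh_sq']
  ring

/-- For `h > 0`, the curve `v ↦ (X_h(v), Z_h(v))` with
`X_h(v) = arcsinh(√((2+h)/h)·sinh(v√h/2))` and `Z_h = 8 X_h'` lies in the level set
`H_p = h` of the pendulum Hamiltonian `H_p(X,Z) = Z²/16 − 2 sech²(X)`. -/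
theorem heteroclinic_energy_h (h : ℝ) (hh : 0 < h) (v : ℝ) :
    (8 * deriv (fun w => Real.arsinh
        (Real.sqrt ((2 + h) / h) * Real.sinh (w * Real.sqrt h / 2))) v) ^ 2 / 16
      + (-2 * (1 / Real.cosh (Real.arsinh
        (Real.sqrt ((2 + h) / h) * Real.sinh (v * Real.sqrt h / 2)))) ^ 2) = h := by
  simp_rw [mul_div_assoc]
  rw [mul_pow, sq_deriv_arsinh_const_mul_sinh, sq_one_div_cosh_arsinh, mul_pow, div_pow,
    sq_sqrt (by positivity), sq_sqrt hh.le]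
  field_simp
  ring
end

section
/- For every ω > 0, the improper integral ∫_{−∞}^{∞} e^{−iωr}·(r²−2)/(r²+2)² dr converges and equals −π·ω·e^{−√2·ω}. -/
open MeasureTheory Real Set Filter
open scoped Topology

lemma tendsto_mul_exp (b : ℝ) (hb : 0 < b) :
    Tendsto (fun x : ℝ => x * Real.exp (-b * x)) atTop (𝓝 0) := by
  have := tendsto_rpow_mul_exp_neg_mul_atTop_nhds_zero 1 b hb
  simpa [Real.rpow_one] using this

lemma tendsto_exp_neg (b : ℝ) (hb : 0 < b) :
    Tendsto (fun x : ℝ => Real.exp (-b * x)) atTop (𝓝 0) :=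
  Real.tendsto_exp_atBot.comp (tendsto_id.const_mul_atTop_of_neg (neg_neg_iff_pos.2 hb))

lemma integrableOn_mul_exp_real (b : ℝ) (hb : 0 < b) :
    IntegrableOn (fun x : ℝ => x * Real.exp (-b * x)) (Ioi 0) := by
  have hderiv : ∀ x ∈ Ioi (0:ℝ), HasDerivAt (fun x : ℝ => -(x/b + 1/b^2) * Real.exp (-b * x))
      (x * Real.exp (-b * x)) x := by
    intro x _
    have h1 : HasDerivAt (fun x : ℝ => -(x/b + 1/b^2)) (-(1/b)) x :=
      (((hasDerivAt_id x).div_const b).add_const (1/b^2)).neg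
    have h2 : HasDerivAt (fun x : ℝ => Real.exp (-b * x)) (Real.exp (-b * x) * (-b * 1)) x :=
      ((hasDerivAt_id x).const_mul (-b)).exp
    have := h1.mul h2
    refine this.congr_deriv ?_
    field_simp
    ring
  have htend : Tendsto (fun x : ℝ => -(x/b + 1/b^2) * Real.exp (-b * x)) atTop (𝓝 0) := by
    have h1 := (tendsto_mul_exp b hb).const_mul (-(1/b))
    have h2 := (tendsto_exp_neg b hb).const_mul (-(1/b^2))
    have h := h1.add h2
    simp only [mul_zero, add_zero] at h
    refine h.congr (fun x => ?_)
    field_simp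
    ring
  refine integrableOn_Ioi_deriv_of_nonneg ?_ hderiv (fun x hx => mul_nonneg (le_of_lt hx) (Real.exp_pos _).le) htend
  exact (Continuous.continuousWithinAt (by fun_prop))

lemma integrableOn_mul_cexp (c : ℂ) (hc : 0 < c.re) :
    IntegrableOn (fun x : ℝ => (x : ℂ) * Complex.exp (-c * x)) (Ioi 0) := by
  have hmeas : AEStronglyMeasurable (fun x : ℝ => (x : ℂ) * Complex.exp (-c * x))
      (volume.restrict (Ioi 0)) := Continuous.aestronglyMeasurable (by fun_prop)
  rw [IntegrableOn, ← integrable_norm_iff hmeas]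
  refine ((integrableOn_mul_exp_real c.re hc).congr_fun (fun x hx => ?_) measurableSet_Ioi)
  simp only [norm_mul, Complex.norm_real, Real.norm_eq_abs,
    Complex.norm_exp]
  rw [abs_of_pos hx]
  congr 1
  simp [Complex.neg_re, Complex.mul_re]

lemma integral_mul_cexp (c : ℂ) (hc : 0 < c.re) :
    ∫ x in Ioi (0:ℝ), (x : ℂ) * Complex.exp (-c * x) = 1 / c ^ 2 := by
  have hc0 : c ≠ 0 := fun h => by simp [h] at hc
  have hderiv : ∀ x ∈ Ici (0:ℝ), HasDerivAt (fun x : ℝ => -((x:ℂ)/c + 1/c^2) * Complex.exp (-c * x))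
      ((x:ℂ) * Complex.exp (-c * x)) x := by
    intro x _
    have hx : HasDerivAt (fun x : ℝ => ((x:ℂ))) 1 x := by
      simpa using (hasDerivAt_id x).ofReal_comp
    have h1 : HasDerivAt (fun x : ℝ => -((x:ℂ)/c + 1/c^2)) (-(1/c)) x :=
      ((hx.div_const c).add_const (1/c^2)).neg
    have h2 : HasDerivAt (fun x : ℝ => Complex.exp (-c * x)) (Complex.exp (-c * x) * (-c * 1)) x :=
      (hx.const_mul (-c)).cexp
    have := h1.mul h2
    refine this.congr_deriv ?_
    field_simp
    ring
  have ht1 : Tendsto (fun x : ℝ => (x:ℂ) * Complex.exp (-c * x)) atTop (𝓝 0) := by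
    apply squeeze_zero_norm' (a := fun x : ℝ => x * Real.exp (-c.re * x))
    · filter_upwards [eventually_ge_atTop (0:ℝ)] with x hx
      simp only [norm_mul, Complex.norm_real, Real.norm_eq_abs,
        Complex.norm_exp]
      rw [abs_of_nonneg hx]
      apply le_of_eq; congr 1
      simp [Complex.neg_re, Complex.mul_re]
    · exact tendsto_mul_exp c.re hc
  have ht2 : Tendsto (fun x : ℝ => Complex.exp (-c * x)) atTop (𝓝 0) := by
    apply squeeze_zero_norm' (a := fun x : ℝ => Real.exp (-c.re * x))
    · filter_upwards with x
      apply le_of_eq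
      simp only [Complex.norm_exp]
      congr 1
      simp [Complex.neg_re, Complex.mul_re]
    · exact tendsto_exp_neg c.re hc
  have htend : Tendsto (fun x : ℝ => -((x:ℂ)/c + 1/c^2) * Complex.exp (-c * x)) atTop (𝓝 0) := by
    have h := (ht1.const_mul (-(1/c))).add (ht2.const_mul (-(1/c^2)))
    simp only [mul_zero, add_zero] at h
    refine h.congr (fun x => ?_)
    field_simp
    ring
  have key := integral_Ioi_of_hasDerivAt_of_tendsto' hderiv (integrableOn_mul_cexp c hc) htend
  rw [key]
  simp [Complex.exp_zero]

noncomputable def mg : ℝ → ℂ := fun x =>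
  ((-2 * π^2 * |x| * Real.exp (-(2 * Real.sqrt 2 * π) * |x|) : ℝ) : ℂ)

lemma hd_pos : 0 < 2 * Real.sqrt 2 * π := by positivity

lemma mg_continuous : Continuous mg := by
  apply Complex.continuous_ofReal.comp
  fun_prop

lemma mg_integrable : Integrable mg := by
  set d := 2 * Real.sqrt 2 * π with hd
  have hd0 : 0 < d := hd_pos
  apply MeasureTheory.LocallyIntegrable.integrable_of_isBigO_atTop_of_norm_isNegInvariant
      (g := fun x : ℝ => x * Real.exp (-d * x)) (mg_continuous.locallyIntegrable)
  · filter_upwards with x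
    simp [mg, Function.comp, abs_neg]
  · apply Asymptotics.IsBigO.of_bound (2 * π^2)
    filter_upwards [eventually_gt_atTop (0:ℝ)] with x hx
    simp only [mg, Complex.norm_real, Real.norm_eq_abs]
    rw [abs_of_pos hx] at *
    have h9 : (0:ℝ) ≤ 2*π^2*x*Real.exp (-d*x) := by positivity
    rw [abs_of_nonpos (by linarith : -2*π^2*x*Real.exp (-d*x) ≤ 0),
      abs_of_nonneg (by positivity : (0:ℝ) ≤ x * Real.exp (-d * x))]
    ring_nf
    apply le_of_eq
    ring
  · exact ⟨Ioi 0, Ioi_mem_atTop 0, integrableOn_mul_exp_real d hd0⟩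

open FourierTransform

lemma exp_split (c₁ c₂ x : ℝ) :
    Complex.exp (-((c₁:ℂ) + (c₂:ℂ)*Complex.I) * (x:ℂ))
      = ((Real.exp (-(c₁*x)) : ℝ) : ℂ) * Complex.exp (((-(c₂*x) : ℝ) : ℂ) * Complex.I) := by
  rw [Complex.ofReal_exp, ← Complex.exp_add]
  congr 1
  push_cast
  ring

lemma mg_fourier (ξ : ℝ) : 𝓕 mg ξ = (((ξ:ℂ))^2 - 2)/(((ξ:ℂ))^2 + 2)^2 := by
  set d := 2 * Real.sqrt 2 * π with hd
  have hd0 : 0 < d := hd_pos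
  set b := 2 * π * ξ with hb
  have hre1 : (0:ℝ) < ((d:ℂ) + b*Complex.I).re := by simp [hd0]
  have hre2 : (0:ℝ) < ((d:ℂ) - b*Complex.I).re := by simp [hd0]
  have hint : Integrable fun v : ℝ => Complex.exp (↑(-2 * π * v * ξ) * Complex.I) * mg v := by
    refine mg_integrable.bdd_mul (Continuous.aestronglyMeasurable (by fun_prop)) (c := 1) (ae_of_all _ fun x => ?_)
    simp [Complex.norm_exp]
  rw [fourier_real_eq_integral_exp_smul]
  simp_rw [smul_eq_mul]
  rw [← intervalIntegral.integral_Iic_add_Ioi (b := (0:ℝ)) hint.integrableOn hint.integrableOn]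
  have hIoi : ∫ x in Ioi (0:ℝ), Complex.exp (↑(-2 * π * x * ξ) * Complex.I) * mg x
      = (-2*π^2 : ℂ) * (1/((d:ℂ) + b*Complex.I)^2) := by
    rw [← integral_mul_cexp ((d:ℂ) + b*Complex.I) hre1, ← smul_eq_mul (α := ℂ), ← integral_smul]
    refine setIntegral_congr_fun measurableSet_Ioi (fun x hx => ?_)
    rw [smul_eq_mul, exp_split d b x]
    simp only [mg]
    rw [abs_of_pos hx]
    rw [show ((-(b*x) : ℝ) : ℂ) = ((-2*π*x*ξ : ℝ) : ℂ) by rw [hb]; push_cast; ring]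
    rw [show (-(d*x) : ℝ) = (-(2*Real.sqrt 2*π) * x : ℝ) by rw [hd]; ring]
    push_cast
    ring
  have hIic : ∫ x in Iic (0:ℝ), Complex.exp (↑(-2 * π * x * ξ) * Complex.I) * mg x
      = (-2*π^2 : ℂ) * (1/((d:ℂ) - b*Complex.I)^2) := by
    rw [show Iic (0:ℝ) = Iic (-0) by norm_num, ← integral_comp_neg_Ioi]
    rw [← integral_mul_cexp ((d:ℂ) - b*Complex.I) hre2, ← smul_eq_mul (α := ℂ), ← integral_smul]
    refine setIntegral_congr_fun measurableSet_Ioi (fun x hx => ?_)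
    rw [smul_eq_mul]
    rw [show (-((d:ℂ) - (b:ℂ)*Complex.I) * (x:ℂ)) = -((d:ℂ) + ((-b : ℝ):ℂ)*Complex.I) * (x:ℂ) by
      push_cast; ring]
    rw [exp_split d (-b) x]
    simp only [mg]
    rw [abs_neg, abs_of_pos hx]
    rw [show ((-(-b*x) : ℝ) : ℂ) = ((-2*π*(-x)*ξ : ℝ) : ℂ) by rw [hb]; push_cast; ring]
    rw [show (-(d*x) : ℝ) = (-(2*Real.sqrt 2*π) * x : ℝ) by rw [hd]; ring]
    push_cast
    ring
  rw [hIoi, hIic]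
  have hπ : (π:ℂ) ≠ 0 := Complex.ofReal_ne_zero.2 Real.pi_ne_zero
  have hs2 : ((Real.sqrt 2 : ℝ):ℂ)^2 = 2 := by
    norm_cast
    exact Real.sq_sqrt (by norm_num)
  have hc1 : ((d:ℂ) + b*Complex.I) ≠ 0 := fun h => by simp [Complex.ext_iff] at h; linarith [hd0, h.1]
  have hc2 : ((d:ℂ) - b*Complex.I) ≠ 0 := fun h => by simp [Complex.ext_iff, sub_eq_zero] at h; linarith [hd0, h.1]
  have hden : ((ξ:ℂ)^2 + 2) ≠ 0 := by
    have h : ((ξ:ℂ)^2 + 2) = (((ξ^2 + 2 : ℝ)):ℂ) := by push_cast; ring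
    rw [h, ne_eq, Complex.ofReal_eq_zero]
    nlinarith [sq_nonneg ξ]
  have hdc : (d:ℂ) = 2 * ((Real.sqrt 2 : ℝ):ℂ) * (π:ℂ) := by rw [hd]; push_cast; ring
  have hbc : (b:ℂ) = 2 * (π:ℂ) * (ξ:ℂ) := by rw [hb]; push_cast; ring
  rw [hdc, hbc] at hc1 hc2 ⊢
  rw [mul_one_div, mul_one_div, div_add_div _ _ (pow_ne_zero 2 hc2) (pow_ne_zero 2 hc1),
    div_eq_div_iff (mul_ne_zero (pow_ne_zero 2 hc2) (pow_ne_zero 2 hc1)) (pow_ne_zero 2 hden)]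
  linear_combination (-16*(π:ℂ)^4*(((ξ:ℂ)^2+2)^2 + 2*((ξ:ℂ)^2-2)*((ξ:ℂ)^2+2) + ((ξ:ℂ)^2-2)*(((Real.sqrt 2:ℝ):ℂ)^2 - (ξ:ℂ)^2*Complex.I^2 - (ξ:ℂ)^2 - 2))) * hs2
    + (-16*(π:ℂ)^4*((ξ:ℂ)^2*(((ξ:ℂ)^2+2)^2) - 2*(ξ:ℂ)^2*((ξ:ℂ)^2-2)*((ξ:ℂ)^2+2) - (ξ:ℂ)^2*((ξ:ℂ)^2-2)*(((Real.sqrt 2:ℝ):ℂ)^2 - (ξ:ℂ)^2*Complex.I^2 - (ξ:ℂ)^2 - 2))) * Complex.I_sq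

lemma Fden_ne (r : ℝ) : ((r:ℂ)^2 + 2) ≠ 0 := by
  have h : ((r:ℂ)^2 + 2) = (((r^2 + 2 : ℝ)):ℂ) := by push_cast; ring
  rw [h, ne_eq, Complex.ofReal_eq_zero]
  nlinarith [sq_nonneg r]

lemma F_bound (r : ℝ) : ‖(((r:ℂ))^2 - 2)/(((r:ℂ))^2 + 2)^2‖ ≤ (1 + r^2)⁻¹ := by
  have hpos : (0:ℝ) < r^2 + 2 := by nlinarith [sq_nonneg r]
  have hcast : (((r:ℂ))^2 - 2)/(((r:ℂ))^2 + 2)^2 = (((r^2-2)/(r^2+2)^2 : ℝ) : ℂ) := by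
    push_cast; ring
  rw [hcast, Complex.norm_real, Real.norm_eq_abs, abs_div, abs_of_pos (by positivity : (0:ℝ) < (r^2+2)^2)]
  have h1 : |r^2 - 2| ≤ r^2 + 2 := by
    rw [abs_le]; constructor <;> nlinarith [sq_nonneg r]
  calc |r^2-2|/(r^2+2)^2 ≤ (r^2+2)/(r^2+2)^2 := by gcongr
    _ = (r^2+2)⁻¹ := by field_simp [sq]
    _ ≤ (1+r^2)⁻¹ := by
        apply inv_anti₀ (by positivity)
        linarith

lemma F_continuous : Continuous (fun r : ℝ => (((r:ℂ))^2 - 2)/(((r:ℂ))^2 + 2)^2) := by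
  apply Continuous.div (by fun_prop) (by fun_prop)
  exact fun x => pow_ne_zero 2 (Fden_ne x)

lemma F_integrable : Integrable (fun r : ℝ => (((r:ℂ))^2 - 2)/(((r:ℂ))^2 + 2)^2) :=
  Integrable.mono' integrable_inv_one_add_sq F_continuous.aestronglyMeasurable
    (ae_of_all _ F_bound)

/-- The Melnikov integral: for every `ω > 0`,
`∫_{−∞}^{∞} e^{−iωr} (r²−2)/(r²+2)² dr = −π ω e^{−√2 ω}`. -/
theorem melnikov_integral (ω : ℝ) (hω : 0 < ω) :
    Integrable (fun r : ℝ =>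
        Complex.exp (-(Complex.I * ω * r)) * (((r : ℂ) ^ 2 - 2) / ((r : ℂ) ^ 2 + 2) ^ 2)) ∧
    (∫ r : ℝ, Complex.exp (-(Complex.I * ω * r))
          * (((r : ℂ) ^ 2 - 2) / ((r : ℂ) ^ 2 + 2) ^ 2))
      = -((Real.pi : ℂ) * ω) * Complex.exp (-((Real.sqrt 2 : ℂ) * ω)) := by
  have hexp1 : ∀ r : ℝ, ‖Complex.exp (-(Complex.I * ω * r))‖ = 1 := by
    intro r
    rw [Complex.norm_exp]
    simp [Complex.mul_re]
  constructor
  · refine Integrable.mono' integrable_inv_one_add_sq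
      (Continuous.aestronglyMeasurable (Continuous.mul (by fun_prop) F_continuous))
      (ae_of_all _ (fun r => ?_))
    rw [norm_mul, hexp1 r, one_mul]
    exact F_bound r
  · have hF : 𝓕 mg = fun ξ : ℝ => (((ξ:ℂ))^2 - 2)/(((ξ:ℂ))^2 + 2)^2 := funext mg_fourier
    have h'f : Integrable (𝓕 mg) := by rw [hF]; exact F_integrable
    have hinv := mg_integrable.fourierInv_fourier_eq h'f (mg_continuous.continuousAt (x := -(ω/(2*π))))
    rw [Real.fourierInv_eq_fourier_neg, neg_neg, hF,
      fourier_real_eq_integral_exp_smul] at hinv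
    have harg : ∀ v : ℝ, ((↑(-2 * π * v * (ω/(2*π))) : ℂ) * Complex.I) = -(Complex.I * ω * v) := by
      intro v
      have h : (-2 * π * v * (ω/(2*π)) : ℝ) = -(ω * v) := by
        field_simp
      rw [h]; push_cast; ring
    have heq : (fun r : ℝ => Complex.exp (-(Complex.I * ω * r))
          * (((r : ℂ) ^ 2 - 2) / ((r : ℂ) ^ 2 + 2) ^ 2))
        = fun v : ℝ => Complex.exp ((↑(-2 * π * v * (ω/(2*π))) : ℂ) * Complex.I)
            • ((((v:ℂ))^2 - 2)/(((v:ℂ))^2 + 2)^2) := by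
      funext v
      rw [smul_eq_mul, harg v]
    rw [heq, hinv]
    have habs : |(-(ω/(2*π)))| = ω/(2*π) := by
      rw [abs_neg, abs_of_pos (by positivity)]
    simp only [mg, habs]
    have h1 : (-2 * π^2 * (ω/(2*π)) : ℝ) = -(π * ω) := by field_simp
    have h2 : (-(2 * Real.sqrt 2 * π) * (ω/(2*π)) : ℝ) = -(Real.sqrt 2 * ω) := by
      field_simp
    rw [h1, h2]
    push_cast [Complex.ofReal_exp]
    ring
end

section
/- Fix 0 < β < π/4 and let D = {v ∈ ℂ : |Im(v)| ≤ −tan(β)·Re(v) + √2/2}. There exists a constant M* > 0 such that for every v ∈ D and every h with 0 < h ≤ 1, |sinh(v·√h/2)| ≥ M*·√h·|v| and |cosh(v·√h/2)| ≥ M*. -/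
/-! Writing `z = x + iy`, one has `|sinh z|² = sinh² x + sin² y`, `|cosh z|² = sinh² x + cos² y`
and `|sinh x| ≥ |x|`. On a sector-strip `|y| ≤ T |x| + A` with `0 ≤ A < π/2`, either `|y|` stays
below a threshold `B < π/2`, where `|sin y| ≥ (2/π)|y|` and `cos y ≥ cos B > 0`, or `|x|` is bounded
below by `(B - A)/(T + 1)`, hence `|y| = O(|x|)` and `sinh x` alone gives both bounds. For `v ∈ D`
and `0 < h ≤ 1` the point `v √h / 2` lies in such a strip with `T = |tan β|` and `A = √2/4`. -/

open Real

lemma Real.abs_le_abs_sinh (x : ℝ) : |x| ≤ |sinh x| := by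
  rw [abs_sinh]
  exact self_le_sinh_iff.2 (abs_nonneg x)

namespace Complex

lemma norm_sinh_sq (z : ℂ) : ‖sinh z‖ ^ 2 = Real.sinh z.re ^ 2 + Real.sin z.im ^ 2 := by
  conv_lhs => rw [← re_add_im z]
  rw [Complex.sq_norm, sinh_add, sinh_mul_I, cosh_mul_I, ← ofReal_sinh, ← ofReal_cosh,
    ← ofReal_sin, ← ofReal_cos, normSq_apply]
  simp only [add_re, add_im, mul_re, mul_im, ofReal_re, ofReal_im, I_re, I_im]
  nlinarith [Real.sin_sq_add_cos_sq z.im, Real.cosh_sq z.re]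

lemma norm_cosh_sq (z : ℂ) : ‖cosh z‖ ^ 2 = Real.sinh z.re ^ 2 + Real.cos z.im ^ 2 := by
  conv_lhs => rw [← re_add_im z]
  rw [Complex.sq_norm, cosh_add, sinh_mul_I, cosh_mul_I, ← ofReal_sinh, ← ofReal_cosh,
    ← ofReal_sin, ← ofReal_cos, normSq_apply]
  simp only [add_re, add_im, mul_re, mul_im, ofReal_re, ofReal_im, I_re, I_im]
  nlinarith [Real.sin_sq_add_cos_sq z.im, Real.cosh_sq z.re]

lemma abs_re_le_norm_sinh (z : ℂ) : |z.re| ≤ ‖sinh z‖ :=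
  (Real.abs_le_abs_sinh _).trans <|
    abs_le_of_sq_le_sq (by rw [norm_sinh_sq]; nlinarith [sq_nonneg (Real.sin z.im)])
      (norm_nonneg _)

lemma abs_sin_im_le_norm_sinh (z : ℂ) : |Real.sin z.im| ≤ ‖sinh z‖ :=
  abs_le_of_sq_le_sq (by rw [norm_sinh_sq]; nlinarith [sq_nonneg (Real.sinh z.re)])
    (norm_nonneg _)

lemma abs_re_le_norm_cosh (z : ℂ) : |z.re| ≤ ‖cosh z‖ :=
  (Real.abs_le_abs_sinh _).trans <|
    abs_le_of_sq_le_sq (by rw [norm_cosh_sq]; nlinarith [sq_nonneg (Real.cos z.im)])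
      (norm_nonneg _)

lemma abs_cos_im_le_norm_cosh (z : ℂ) : |Real.cos z.im| ≤ ‖cosh z‖ :=
  abs_le_of_sq_le_sq (by rw [norm_cosh_sq]; nlinarith [sq_nonneg (Real.sinh z.re)])
    (norm_nonneg _)

lemma abs_im_le_pi_div_two_mul_norm_sinh {z : ℂ} (hz : |z.im| ≤ π / 2) :
    |z.im| ≤ π / 2 * ‖sinh z‖ := by
  -- Jordan's inequality `(2/π) |y| ≤ sin |y|`
  have hjordan : 2 / π * |z.im| ≤ |Real.sin z.im| := by
    rw [abs_sin_eq_sin_abs_of_abs_le_pi (by linarith [pi_pos])]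
    exact mul_le_sin (abs_nonneg _) hz
  calc |z.im| = π / 2 * (2 / π * |z.im|) := by field_simp
    _ ≤ π / 2 * ‖sinh z‖ := by
      gcongr
      exact hjordan.trans (abs_sin_im_le_norm_sinh z)

section SectorStrip

variable {T A : ℝ}

lemma div_le_abs_re_of_lt_abs_im (hT : 0 ≤ T) {z : ℂ} (hz : |z.im| ≤ T * |z.re| + A) {B : ℝ}
    (hB : B < |z.im|) : (B - A) / (T + 1) ≤ |z.re| := by
  rw [div_le_iff₀ (by linarith)]
  nlinarith [abs_nonneg z.re]

theorem exists_pos_mul_norm_le_norm_sinh (hT : 0 ≤ T) (hA0 : 0 ≤ A) (hA : A < π / 2) :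
    ∃ M > 0, ∀ z : ℂ, |z.im| ≤ T * |z.re| + A → M * ‖z‖ ≤ ‖sinh z‖ := by
  set c := (π / 2 - A) / (T + 1)
  have hc : 0 < c := div_pos (by linarith) (by linarith)
  have hAc : 0 ≤ A / c := div_nonneg hA0 hc.le
  set K := 1 + π / 2 + T + A / c with hK_def
  have hK : 0 < K := by positivity
  refine ⟨K⁻¹, inv_pos.2 hK, fun z hz => ?_⟩
  rw [inv_mul_le_iff₀ hK]
  have hre := abs_re_le_norm_sinh z
  calc ‖z‖ ≤ |z.re| + |z.im| := norm_le_abs_re_add_abs_im z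
    _ ≤ K * ‖sinh z‖ := by
      rcases le_or_gt |z.im| (π / 2) with hsmall | hlarge
      · have him := abs_im_le_pi_div_two_mul_norm_sinh hsmall
        calc |z.re| + |z.im| ≤ (1 + π / 2) * ‖sinh z‖ := by linarith
          _ ≤ K * ‖sinh z‖ := by gcongr; linarith
      · have hcre := div_le_abs_re_of_lt_abs_im hT hz hlarge
        have hA_le : A ≤ A / c * |z.re| := by
          calc A = A / c * c := (div_mul_cancel₀ A hc.ne').symm
            _ ≤ A / c * |z.re| := mul_le_mul_of_nonneg_left hcre hAc
        calc |z.re| + |z.im| ≤ (1 + T + A / c) * |z.re| := by linarith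
          _ ≤ (1 + T + A / c) * ‖sinh z‖ := by gcongr
          _ ≤ K * ‖sinh z‖ := by gcongr; linarith [pi_pos]

theorem exists_pos_le_norm_cosh (hT : 0 ≤ T) (hA0 : 0 ≤ A) (hA : A < π / 2) :
    ∃ M > 0, ∀ z : ℂ, |z.im| ≤ T * |z.re| + A → M ≤ ‖cosh z‖ := by
  set B := (A + π / 2) / 2 with hB_def
  have hcosB : 0 < Real.cos B := cos_pos_of_mem_Ioo ⟨by linarith [pi_pos], by linarith⟩
  have hc : 0 < (B - A) / (T + 1) := div_pos (by linarith) (by linarith)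
  refine ⟨min (Real.cos B) ((B - A) / (T + 1)), lt_min hcosB hc, fun z hz => ?_⟩
  rcases le_or_gt |z.im| B with hsmall | hlarge
  · calc min (Real.cos B) ((B - A) / (T + 1)) ≤ Real.cos B := min_le_left _ _
      _ ≤ Real.cos |z.im| := cos_le_cos_of_nonneg_of_le_pi (abs_nonneg _) (by linarith) hsmall
      _ ≤ ‖cosh z‖ := by
        rw [Real.cos_abs]
        exact (le_abs_self _).trans (abs_cos_im_le_norm_cosh z)
  · exact (min_le_right _ _).trans
      ((div_le_abs_re_of_lt_abs_im hT hz hlarge).trans (abs_re_le_norm_cosh z))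

end SectorStrip

lemma abs_im_mul_ofReal_div_two_le {t a s : ℝ} {v : ℂ} (ha : 0 ≤ a) (hs0 : 0 ≤ s) (hs1 : s ≤ 1)
    (hv : |v.im| ≤ -t * v.re + a) : |(v * s / 2).im| ≤ |t| * |(v * s / 2).re| + a / 2 := by
  have hre : (v * s / 2).re = v.re * (s / 2) := by
    simp only [div_ofNat_re, mul_re, ofReal_re, ofReal_im, mul_zero, sub_zero]; ring
  have him : (v * s / 2).im = v.im * (s / 2) := by
    simp only [div_ofNat_im, mul_im, ofReal_im, mul_zero, ofReal_re, zero_add]; ring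
  rw [hre, him, abs_mul, abs_mul, abs_of_nonneg (by linarith : 0 ≤ s / 2)]
  have hneg : -t * v.re ≤ |t| * |v.re| := by
    rw [← abs_mul, neg_mul]
    exact neg_le_abs _
  nlinarith

end Complex

theorem sinh_cosh_lower_bounds_general (β : ℝ) :
    ∃ M : ℝ, 0 < M ∧
      ∀ v : ℂ, |v.im| ≤ -Real.tan β * v.re + Real.sqrt 2 / 2 →
        ∀ h : ℝ, 0 < h → h ≤ 1 →
          M * Real.sqrt h * ‖v‖
              ≤ ‖Complex.sinh (v * Real.sqrt h / 2)‖ ∧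
          M ≤ ‖Complex.cosh (v * Real.sqrt h / 2)‖ := by
  have hA0 : 0 ≤ √2 / 2 / 2 := by positivity
  have hA : √2 / 2 / 2 < π / 2 := by
    have : √2 < 2 := by rw [sqrt_lt' two_pos]; norm_num
    linarith [pi_gt_three]
  obtain ⟨Ms, hMs, hsinh⟩ := Complex.exists_pos_mul_norm_le_norm_sinh (abs_nonneg (tan β)) hA0 hA
  obtain ⟨Mc, hMc, hcosh⟩ := Complex.exists_pos_le_norm_cosh (abs_nonneg (tan β)) hA0 hA
  refine ⟨min (Ms / 2) Mc, lt_min (half_pos hMs) hMc, fun v hv h _ h1 => ?_⟩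
  have hz := Complex.abs_im_mul_ofReal_div_two_le (by positivity) (sqrt_nonneg h)
    (sqrt_le_one.2 h1) hv
  refine ⟨?_, (min_le_right _ _).trans (hcosh _ hz)⟩
  calc min (Ms / 2) Mc * √h * ‖v‖ ≤ Ms / 2 * √h * ‖v‖ := by gcongr; exact min_le_left _ _
    _ = Ms * ‖v * √h / 2‖ := by
      rw [norm_div, norm_mul, Complex.norm_real, norm_of_nonneg (sqrt_nonneg h),
        Complex.norm_ofNat]
      ring
    _ ≤ _ := hsinh _ hz

/-- Uniform lower bounds for `sinh` and `cosh` on the sectorial domain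
`D = {v : |Im v| ≤ −tan β · Re v + √2/2}`, `0 < β < π/4`: there is `M* > 0` with
`|sinh(v√h/2)| ≥ M* √h |v|` and `|cosh(v√h/2)| ≥ M*` for all `v ∈ D`, `0 < h ≤ 1`. -/
theorem sinh_cosh_lower_bounds (β : ℝ) (hβ0 : 0 < β) (hβ : β < Real.pi / 4) :
    ∃ M : ℝ, 0 < M ∧
      ∀ v : ℂ, |v.im| ≤ -Real.tan β * v.re + Real.sqrt 2 / 2 →
        ∀ h : ℝ, 0 < h → h ≤ 1 →
          M * Real.sqrt h * ‖v‖
              ≤ ‖Complex.sinh (v * Real.sqrt h / 2)‖ ∧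
          M ≤ ‖Complex.cosh (v * Real.sqrt h / 2)‖ :=
  sinh_cosh_lower_bounds_general β
end
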